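/- The function 𝓗(w) = 𝓛₂(2w/(1+w)) + (1/4)(log((1-w)/(1+w)))² is odd: 𝓗(-w) = -𝓗(w), for w in ℂ with w not in (-∞,-1] ∪ [1,∞). -/

import Mathlib

open Complex

/-- The dilogarithm `𝓛₂(z) = -∫₀^z log(1-s)/s ds`, as an integral along the
straight path from `0` to `z`. -/
noncomputable def dilog (z : ℂ) : ℂ :=
  -∫ t in (0:ℝ)..1, Complex.log (1 - (t : ℂ) * z) / (t : ℂ)

/-- `𝓗(w) = 𝓛₂(2w/(1+w)) + (1/4)(log((1-w)/(1+w)))²`. -/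
noncomputable def scrH (w : ℂ) : ℂ :=
  dilog (2 * w / (1 + w)) + (1/4) * (Complex.log ((1 - w) / (1 + w)))^2

/-!
`𝓗(w) + 𝓗(-w)` vanishes at `0`, so it suffices that its derivative vanishes on
`ℂ ∖ ((-∞,-1] ∪ [1,∞))`, which is open and star-shaped about `0`. Differentiating under
the integral sign gives `z 𝓛₂'(z) = -log (1 - z)`; since `1 - 2w/(1+w) = (1-w)/(1+w)`,
this yields `w 𝓗'(w) = -log ((1-w)/(1+w)) / (1 - w²)`, which is odd in `w` because
`w ↦ -w` inverts `(1-w)/(1+w)`. Hence `𝓗'` is even.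
-/

open MeasureTheory Set Metric Filter Topology intervalIntegral

section

variable {z w : ℂ}

lemma one_sub_ofReal_mul_mem_slitPlane (hz : 1 - z ∈ slitPlane) {t : ℝ}
    (ht : t ∈ Icc (0 : ℝ) 1) : 1 - (t : ℂ) * z ∈ slitPlane := by
  have := starConvex_one_slitPlane.add_smul_mem (y := -z) (by rwa [← sub_eq_add_neg]) ht.1 ht.2
  rwa [real_smul, mul_neg, ← sub_eq_add_neg] at this

lemma exists_closedBall_le_norm_one_sub_ofReal_mul (hz : 1 - z ∈ slitPlane) :
    ∃ ε > 0, ∃ c > 0, ∀ x ∈ closedBall z ε,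
      1 - x ∈ slitPlane ∧ ∀ t ∈ Icc (0 : ℝ) 1, c ≤ ‖1 - (t : ℂ) * x‖ := by
  obtain ⟨ε, hε, hball⟩ := nhds_basis_closedBall.mem_iff.1
    ((isOpen_slitPlane.preimage (continuous_const.sub continuous_id)).mem_nhds hz)
  obtain ⟨p, hp, hmin⟩ := (isCompact_Icc.prod (isCompact_closedBall z ε)).exists_isMinOn
    ⟨(0, z), ⟨le_rfl, zero_le_one⟩, mem_closedBall_self hε.le⟩
    (by fun_prop : Continuous fun p : ℝ × ℂ => ‖1 - (p.1 : ℂ) * p.2‖).continuousOn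
  refine ⟨ε, hε, _, norm_pos_iff.2 <| slitPlane_ne_zero <|
    one_sub_ofReal_mul_mem_slitPlane (hball hp.2) hp.1,
    fun x hx => ⟨hball hx, fun t ht => hmin (mk_mem_prod ht hx)⟩⟩

lemma intervalIntegrable_log_one_sub_ofReal_mul_div (hz : 1 - z ∈ slitPlane) :
    IntervalIntegrable (fun t : ℝ => log (1 - (t : ℂ) * z) / t) volume 0 1 := by
  -- the integrand is the difference quotient of `t ↦ log (1 - t z)` at `0`: it extends
  -- continuously to `t = 0`
  set U := {t : ℝ | 1 - (t : ℂ) * z ∈ slitPlane}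
  have hU : uIcc (0 : ℝ) 1 ⊆ U := by
    rw [uIcc_of_le zero_le_one]
    exact fun t ht => one_sub_ofReal_mul_mem_slitPlane hz ht
  have hcont : ContinuousOn (fun t : ℝ => log (1 - (t : ℂ) * z)) U :=
    fun t ht =>
    (ContinuousAt.clog (f := fun t : ℝ => 1 - (t : ℂ) * z) (by fun_prop) ht).continuousWithinAt
  have hdiff : HasDerivAt (fun t : ℝ => log (1 - (t : ℂ) * z)) (-z) 0 := by
    simpa using ((ofRealCLM.hasDerivAt (x := (0 : ℝ))).mul_const z).const_sub 1 |>.clog_real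
      (by simp)
  have hU0 : U ∈ 𝓝 (0 : ℝ) :=
    (isOpen_slitPlane.preimage (by fun_prop)).mem_nhds (hU left_mem_uIcc)
  refine (((continuousOn_dslope hU0).2 ⟨hcont, hdiff.differentiableAt⟩).mono hU
    |>.intervalIntegrable).congr_uIoo fun t ht => ?_
  rw [dslope_of_ne _ (ne_of_gt (by simpa using ht.1)), slope_def_module]
  simp [div_eq_inv_mul]

theorem hasDerivAt_dilog (hz : 1 - z ∈ slitPlane) :
    HasDerivAt dilog (∫ t in (0 : ℝ)..1, (1 - (t : ℂ) * z)⁻¹) z := by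
  obtain ⟨ε, hε, c, hc, hball⟩ := exists_closedBall_le_norm_one_sub_ofReal_mul hz
  have hIcc : ∀ {t : ℝ}, t ∈ uIoc (0 : ℝ) 1 → t ∈ Icc (0 : ℝ) 1 := fun ht =>
    Ioc_subset_Icc_self (by rwa [uIoc_of_le zero_le_one] at ht)
  have key := hasDerivAt_integral_of_dominated_loc_of_deriv_le
    (F := fun x t => log (1 - (t : ℂ) * x) / t) (F' := fun x t => -(1 - (t : ℂ) * x)⁻¹)
    (bound := fun _ => c⁻¹) (ball_mem_nhds z hε)
    (Eventually.of_forall fun x => (by fun_prop : Measurable _).aestronglyMeasurable)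
    (intervalIntegrable_log_one_sub_ofReal_mul_div hz)
    (by fun_prop : Measurable _).aestronglyMeasurable
    (ae_of_all _ fun t ht x hx => by
      simpa using inv_anti₀ hc ((hball x (ball_subset_closedBall hx)).2 t (hIcc ht)))
    intervalIntegrable_const
    (ae_of_all _ fun t ht x hx => by
      have hslit :=
        one_sub_ofReal_mul_mem_slitPlane (hball x (ball_subset_closedBall hx)).1 (hIcc ht)
      have ht0 : (t : ℂ) ≠ 0 := by
        rw [uIoc_of_le zero_le_one] at ht; exact_mod_cast ht.1.ne'
      refine ((hasDerivAt_id x).const_mul (t : ℂ)).const_sub 1 |>.clog hslit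
        |>.div_const (t : ℂ) |>.congr_deriv ?_
      field_simp [slitPlane_ne_zero hslit]
      rfl)
  exact key.2.neg.congr_deriv (by simp [intervalIntegral.integral_neg])

lemma mul_integral_inv_one_sub_ofReal_mul (hz : 1 - z ∈ slitPlane) :
    z * ∫ t in (0 : ℝ)..1, (1 - (t : ℂ) * z)⁻¹ = -log (1 - z) := by
  rw [← log_inv _ (slitPlane_arg_ne_pi hz), log_inv_eq_integral hz]
  simp only [real_smul]

lemma one_sub_mem_slitPlane_iff : 1 - w ∈ slitPlane ↔ ¬(w.im = 0 ∧ 1 ≤ w.re) := by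
  simp only [mem_slitPlane_iff, sub_re, one_re, sub_im, one_im, zero_sub, ne_eq, neg_eq_zero,
    sub_pos, not_and, not_le]
  tauto

lemma one_add_mem_slitPlane_iff : 1 + w ∈ slitPlane ↔ ¬(w.im = 0 ∧ w.re ≤ -1) := by
  rw [← sub_neg_eq_add, one_sub_mem_slitPlane_iff, neg_im, neg_re, neg_eq_zero, le_neg]

def doubleSlitPlane : Set ℂ := {w | 1 - w ∈ slitPlane ∧ 1 + w ∈ slitPlane}

lemma isOpen_doubleSlitPlane : IsOpen doubleSlitPlane :=
  (isOpen_slitPlane.preimage (by fun_prop)).inter (isOpen_slitPlane.preimage (by fun_prop))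

lemma zero_mem_doubleSlitPlane : (0 : ℂ) ∈ doubleSlitPlane := by
  simp [doubleSlitPlane]

lemma neg_mem_doubleSlitPlane (hw : w ∈ doubleSlitPlane) : -w ∈ doubleSlitPlane :=
  ⟨by simpa [← sub_eq_add_neg] using hw.2, by simpa [← sub_eq_add_neg] using hw.1⟩

lemma starConvex_doubleSlitPlane : StarConvex ℝ 0 doubleSlitPlane := by
  refine starConvex_zero_iff.2 fun w hw t ht0 ht1 => ⟨?_, ?_⟩
  · simpa [real_smul] using one_sub_ofReal_mul_mem_slitPlane hw.1 ⟨ht0, ht1⟩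
  · simpa [real_smul] using
      one_sub_ofReal_mul_mem_slitPlane (z := -w) (by simpa using hw.2) ⟨ht0, ht1⟩

lemma div_mem_slitPlane_of_mem_doubleSlitPlane (hw : w ∈ doubleSlitPlane) :
    (1 - w) / (1 + w) ∈ slitPlane := by
  have hq : 0 < normSq (1 + w) := normSq_pos.2 (slitPlane_ne_zero hw.2)
  obtain ⟨h₁, h₂⟩ := hw
  rw [mem_slitPlane_iff] at h₁ h₂ ⊢
  rw [div_re, div_im]
  simp only [sub_re, one_re, sub_im, one_im, add_re, add_im, zero_sub, zero_add] at h₁ h₂ hq ⊢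
  rcases eq_or_ne w.im 0 with hy | hy
  · left
    simp only [hy, neg_zero, ne_eq, not_true_eq_false, or_false, mul_zero, zero_div,
      add_zero] at h₁ h₂ ⊢
    exact div_pos (mul_pos h₁ h₂) hq
  · right
    rw [← sub_div]
    exact div_ne_zero (fun h => hy (by linarith)) hq.ne'

lemma one_sub_two_mul_div (hw : 1 + w ≠ 0) : 1 - 2 * w / (1 + w) = (1 - w) / (1 + w) := by
  rw [one_sub_div hw]
  ring

lemma log_one_add_div_one_sub (hw : w ∈ doubleSlitPlane) :
    log ((1 + w) / (1 - w)) = -log ((1 - w) / (1 + w)) := by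
  rw [← log_inv _ (slitPlane_arg_ne_pi (div_mem_slitPlane_of_mem_doubleSlitPlane hw)), inv_div]

lemma hasDerivAt_scrH (hw : w ∈ doubleSlitPlane) :
    HasDerivAt scrH
      ((∫ t in (0 : ℝ)..1, (1 - (t : ℂ) * (2 * w / (1 + w)))⁻¹) * (2 / (1 + w) ^ 2)
        - log ((1 - w) / (1 + w)) / (1 - w ^ 2)) w := by
  have hp := slitPlane_ne_zero hw.2
  have hq := slitPlane_ne_zero hw.1
  have hslit := div_mem_slitPlane_of_mem_doubleSlitPlane hw
  have hA : HasDerivAt (fun u => 2 * u / (1 + u)) (2 / (1 + w) ^ 2) w := by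
    refine ((hasDerivAt_id' w).const_mul 2).div ((hasDerivAt_id' w).const_add 1) hp
      |>.congr_deriv ?_
    field_simp
    ring
  have hM : HasDerivAt (fun u => (1 - u) / (1 + u)) (-2 / (1 + w) ^ 2) w := by
    refine ((hasDerivAt_id' w).const_sub 1).div ((hasDerivAt_id' w).const_add 1) hp
      |>.congr_deriv ?_
    field_simp
    ring
  have hdilog := (hasDerivAt_dilog (by rwa [one_sub_two_mul_div hp])).comp w hA
  refine (hdilog.add (((hM.clog hslit).pow 2).const_mul (1 / 4))).congr_deriv ?_
  set I := ∫ t in (0 : ℝ)..1, (1 - (t : ℂ) * (2 * w / (1 + w)))⁻¹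
  have : (1 : ℂ) - w ^ 2 = (1 - w) * (1 + w) := by ring
  rw [this]
  field_simp
  ring

lemma mul_deriv_scrH (hw : w ∈ doubleSlitPlane) :
    w * deriv scrH w = -log ((1 - w) / (1 + w)) / (1 - w ^ 2) := by
  have hp := slitPlane_ne_zero hw.2
  have hq := slitPlane_ne_zero hw.1
  have h := mul_integral_inv_one_sub_ofReal_mul (z := 2 * w / (1 + w))
    (by rw [one_sub_two_mul_div hp]; exact div_mem_slitPlane_of_mem_doubleSlitPlane hw)
  rw [one_sub_two_mul_div hp] at h
  rw [(hasDerivAt_scrH hw).deriv]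
  set I := ∫ t in (0 : ℝ)..1, (1 - (t : ℂ) * (2 * w / (1 + w)))⁻¹
  have : (1 : ℂ) - w ^ 2 = (1 - w) * (1 + w) := by ring
  rw [this]
  have h' : 2 * w * I = -((1 + w) * log ((1 - w) / (1 + w))) := by
    field_simp at h
    exact h
  field_simp
  linear_combination (1 - w) * h'

lemma deriv_scrH_neg (hw : w ∈ doubleSlitPlane) : deriv scrH (-w) = deriv scrH w := by
  rcases eq_or_ne w 0 with rfl | hw0
  · rw [neg_zero]
  refine mul_left_cancel₀ hw0 ?_
  have h := mul_deriv_scrH (neg_mem_doubleSlitPlane hw)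
  rw [sub_neg_eq_add, ← sub_eq_add_neg, neg_sq, log_one_add_div_one_sub hw] at h
  rw [mul_deriv_scrH hw]
  linear_combination -h

lemma scrH_add_scrH_neg (hw : w ∈ doubleSlitPlane) : scrH w + scrH (-w) = 0 := by
  have hdiff : ∀ u ∈ doubleSlitPlane, DifferentiableAt ℂ scrH u := fun u hu =>
    (hasDerivAt_scrH hu).differentiableAt
  have hdiff_neg : ∀ u ∈ doubleSlitPlane, DifferentiableAt ℂ (fun u => scrH (-u)) u :=
    fun u hu => differentiableAt_comp_neg.2 (hdiff _ (neg_mem_doubleSlitPlane hu))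
  have hderiv : EqOn (deriv fun u => scrH u + scrH (-u)) 0 doubleSlitPlane := fun u hu => by
    rw [deriv_fun_add (hdiff u hu) (hdiff_neg u hu), deriv_comp_neg, deriv_scrH_neg hu,
      add_neg_cancel, Pi.zero_apply]
  have := isOpen_doubleSlitPlane.is_const_of_deriv_eq_zero
    (starConvex_doubleSlitPlane.isPathConnected zero_mem_doubleSlitPlane).isConnected.isPreconnected
    (fun u hu => ((hdiff u hu).add (hdiff_neg u hu)).differentiableWithinAt) hderiv hw
    zero_mem_doubleSlitPlane
  simpa [scrH, dilog] using this

end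

/-- `𝓗` is odd away from the branch cuts `(-∞,-1] ∪ [1,∞)`. -/
theorem scrH_odd (w : ℂ)
    (hw1 : ¬(w.im = 0 ∧ w.re ≤ -1))
    (hw2 : ¬(w.im = 0 ∧ 1 ≤ w.re)) :
    scrH (-w) = -scrH w := by
  linear_combination
    scrH_add_scrH_neg ⟨one_sub_mem_slitPlane_iff.2 hw2, one_add_mem_slitPlane_iff.2 hw1⟩
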